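/- In any winning protocol, no prisoner may become finished (i.e., reach a state from which he will never again reconfigure a room or declare, regardless of future visits) before there is a moment at which he simultaneously provably owns all configurations. -/
import Mathlib


/-- A prisoner's observation history: the list of (configuration seen on entry,
configuration left on exit) for each of his visits so far. -/
abbrev Hist (C : Type) := List (C × C)

/-- A deterministic strategy: for each prisoner, a function from his history
and the configuration of the room he enters to the configuration he leaves the
room in, together with whether he declares. -/
abbrev Strategy (n : ℕ) (C : Type) := Fin n → Hist C → C → C × Bool

/-- A schedule: who visits which room at each step. -/
abbrev Schedule (n r : ℕ) := ℕ → Fin n × Fin r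

/-- Global state of an execution. -/
structure PState (n r : ℕ) (C : Type) where
  rooms : Fin r → C
  hist : Fin n → Hist C
  declared : Bool

/-- One visit of prisoner `v.1` to room `v.2`. -/
def pstep {n r : ℕ} {C : Type} (σ : Strategy n C) (v : Fin n × Fin r)
    (s : PState n r C) : PState n r C :=
  let cur := s.rooms v.2
  let a := σ v.1 (s.hist v.1) cur
  { rooms := Function.update s.rooms v.2 a.1
    hist := Function.update s.hist v.1 (s.hist v.1 ++ [(cur, a.1)])
    declared := s.declared || a.2 }

/-- The state after `t` visits, starting from initial room configurations `init`. -/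
def prun {n r : ℕ} {C : Type} (σ : Strategy n C) (sch : Schedule n r)
    (init : Fin r → C) : ℕ → PState n r C
  | 0 => ⟨init, fun _ => [], false⟩
  | t + 1 => pstep σ (sch t) (prun σ sch init t)

/-- A schedule is valid if every prisoner visits every room infinitely often. -/
def ValidSchedule {n r : ℕ} (sch : Schedule n r) : Prop :=
  ∀ (p : Fin n) (rm : Fin r), {t | sch t = (p, rm)}.Infinite

/-- Prisoner `p` has visited room `rm` within the first `t` visits. -/
def VisitedBy {n r : ℕ} (sch : Schedule n r) (t : ℕ) (p : Fin n) (rm : Fin r) : Prop :=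
  ∃ t' < t, sch t' = (p, rm)

/-- A strategy is winning for initial configurations `init` if under every
valid schedule some prisoner eventually declares, and every declaration occurs
only after each prisoner has visited every room at least once. -/
def Winning {n r : ℕ} {C : Type} (σ : Strategy n C) (init : Fin r → C) : Prop :=
  ∀ sch : Schedule n r, ValidSchedule sch →
    (∃ t, (prun σ sch init t).declared = true) ∧
    (∀ t, (prun σ sch init t).declared = true → ∀ p rm, VisitedBy sch t p rm)

/-- The observed history of the first `t` visits: the ordered sequence of
events "prisoner `p` entered a room in configuration `a` and left it in
configuration `b`" (room identities are not observable). -/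
def obsHist {n r : ℕ} {C : Type} (σ : Strategy n C) (sch : Schedule n r)
    (init : Fin r → C) (t : ℕ) : List (Fin n × C × C) :=
  (List.range t).map (fun t' =>
    ((sch t').1, (prun σ sch init t').rooms (sch t').2,
      (prun σ sch init (t' + 1)).rooms (sch t').2))

/-- Prisoner `p` owns configuration `c` at time `t`: he has visited every room
currently in configuration `c`. -/
def Owns {n r : ℕ} {C : Type} (σ : Strategy n C) (sch : Schedule n r)
    (init : Fin r → C) (t : ℕ) (p : Fin n) (c : C) : Prop :=
  ∀ rm : Fin r, (prun σ sch init t).rooms rm = c → VisitedBy sch t p rm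

/-- Prisoner `p` provably owns configuration `c` at time `t`: in every visit
sequence producing the same observed history, `p` owns `c` at that time. -/
def ProvablyOwns {n r : ℕ} {C : Type} (σ : Strategy n C) (sch : Schedule n r)
    (init : Fin r → C) (t : ℕ) (p : Fin n) (c : C) : Prop :=
  ∀ sch' : Schedule n r, obsHist σ sch' init t = obsHist σ sch init t →
    Owns σ sch' init t p c

/-- Prisoner `p` is finished at time `t`: regardless of the future visits
(i.e., under any schedule agreeing with `sch` before time `t`), `p` will
never again change the configuration of a room, and never declare. -/
def FinishedAt {n r : ℕ} {C : Type} (σ : Strategy n C) (sch : Schedule n r)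
    (init : Fin r → C) (t : ℕ) (p : Fin n) : Prop :=
  ∀ sch' : Schedule n r, (∀ u < t, sch' u = sch u) →
    ∀ u, t ≤ u → (sch' u).1 = p →
      (prun σ sch' init (u + 1)).rooms = (prun σ sch' init u).rooms ∧
      (σ p ((prun σ sch' init u).hist p)
          ((prun σ sch' init u).rooms (sch' u).2)).2 = false


section PrisonHelpers
variable {n r : ℕ} {C : Type} (σ : Strategy n C) (init : Fin r → C)

variable {n r : ℕ} {C : Type} (σ : Strategy n C) (init : Fin r → C)

lemma prun_congr (s1 s2 : Schedule n r) (v : ℕ) (h : ∀ u < v, s1 u = s2 u) :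
    prun σ s1 init v = prun σ s2 init v := by
  induction v with
  | zero => rfl
  | succ v ih =>
    simp only [prun]
    rw [ih (fun u hu => h u (hu.trans (Nat.lt_succ_self v))), h v (Nat.lt_succ_self v)]

lemma declared_mono (s : Schedule n r) {u v : ℕ} (huv : u ≤ v)
    (h : (prun σ s init u).declared = true) : (prun σ s init v).declared = true := by
  induction v, huv using Nat.le_induction with
  | base => exact h
  | succ v hv ih => simp [prun, pstep, ih]

lemma obs_point (s1 s2 : Schedule n r) (t : ℕ)
    (h : obsHist σ s1 init t = obsHist σ s2 init t) {u : ℕ} (hu : u < t) :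
    (s1 u).1 = (s2 u).1 ∧
    (prun σ s1 init u).rooms (s1 u).2 = (prun σ s2 init u).rooms (s2 u).2 := by
  have h2 := congrArg (fun l => l[u]?) h
  simp only [obsHist, List.getElem?_map, List.getElem?_range hu, Option.map_some,
    Option.some.injEq, Prod.mk.injEq] at h2
  exact ⟨h2.1, h2.2.1⟩

lemma hist_decl_eq (s1 s2 : Schedule n r) (t : ℕ)
    (h : obsHist σ s1 init t = obsHist σ s2 init t) :
    ∀ u ≤ t, (prun σ s1 init u).hist = (prun σ s2 init u).hist ∧
      (prun σ s1 init u).declared = (prun σ s2 init u).declared := by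
  intro u hu
  induction u with
  | zero => exact ⟨rfl, rfl⟩
  | succ u ih =>
    obtain ⟨hh, hd⟩ := ih (by omega)
    obtain ⟨hq, hc⟩ := obs_point σ init s1 s2 t h (show u < t by omega)
    simp only [prun, pstep]
    rw [hc, hh, hq, hd]
    exact ⟨rfl, rfl⟩

lemma exists_perm (s1 s2 : Schedule n r) (t : ℕ)
    (h : obsHist σ s1 init t = obsHist σ s2 init t) :
    ∀ u ≤ t, ∃ π : Equiv.Perm (Fin r),
      ∀ j, (prun σ s1 init u).rooms (π j) = (prun σ s2 init u).rooms j := by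
  intro u hu
  induction u with
  | zero => exact ⟨Equiv.refl _, fun j => rfl⟩
  | succ u ih =>
    obtain ⟨π, hπ⟩ := ih (by omega)
    obtain ⟨hq, hc⟩ := obs_point σ init s1 s2 t h (show u < t by omega)
    have hh := (hist_decl_eq σ init s1 s2 t h u (by omega)).1
    have ha : σ (s1 u).1 ((prun σ s1 init u).hist (s1 u).1) ((prun σ s1 init u).rooms (s1 u).2)
        = σ (s2 u).1 ((prun σ s2 init u).hist (s2 u).1) ((prun σ s2 init u).rooms (s2 u).2) := by
      rw [hc, hh, hq]
    refine ⟨(Equiv.swap (s2 u).2 (π.symm (s1 u).2)).trans π, fun i => ?_⟩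
    simp only [prun, pstep, Equiv.trans_apply]
    set j := (s2 u).2 with hj
    set k := π.symm (s1 u).2 with hk
    have hπk : π k = (s1 u).2 := π.apply_symm_apply _
    by_cases hij : i = j
    · subst hij
      rw [Equiv.swap_apply_left, hπk, Function.update_self, Function.update_self, ha]
    · by_cases hik : i = k
      · subst hik
        rw [Equiv.swap_apply_right]
        have h1 : π j ≠ (s1 u).2 := by
          rw [← hπk]; intro hcon
          exact hij (π.injective hcon).symm
        rw [Function.update_of_ne h1, Function.update_of_ne hij, hπ, ← hc, ← hπk, hπ]
      · rw [Equiv.swap_apply_of_ne_of_ne hij hik]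
        have h1 : π i ≠ (s1 u).2 := by
          rw [← hπk]; exact fun hcon => hik (π.injective hcon)
        rw [Function.update_of_ne h1, Function.update_of_ne hij, hπ]


lemma prun_succ (s : Schedule n r) (v : ℕ) :
    prun σ s init (v + 1) = pstep σ (s v) (prun σ s init v) := rfl

/-- round-robin over all (prisoner, room) pairs -/
def cyc (hn : 0 < n) (hr : 0 < r) (m : ℕ) : Fin n × Fin r :=
  (⟨m / r % n, Nat.mod_lt _ hn⟩, ⟨m % r, Nat.mod_lt _ hr⟩)

lemma cyc_calc (hn : 0 < n) (hr : 0 < r) (q : Fin n) (rm : Fin r) (k : ℕ) :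
    cyc hn hr (r * (q.val + n * k) + rm.val) = (q, rm) ∧
    k ≤ r * (q.val + n * k) + rm.val := by
  constructor
  · have h1 : (r * (q.val + n * k) + rm.val) % r = rm.val := by
      rw [Nat.mul_add_mod]; exact Nat.mod_eq_of_lt rm.isLt
    have h2 : (r * (q.val + n * k) + rm.val) / r = q.val + n * k := by
      rw [Nat.mul_add_div hr, Nat.div_eq_of_lt rm.isLt, Nat.add_zero]
    have h3 : (q.val + n * k) % n = q.val := by
      rw [Nat.add_mul_mod_self_left]; exact Nat.mod_eq_of_lt q.isLt
    simp only [cyc, Prod.mk.injEq]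
    refine ⟨Fin.ext ?_, Fin.ext ?_⟩
    · show (r * (q.val + n * k) + rm.val) / r % n = q.val
      rw [h2, h3]
    · exact h1
  · have h0 : k ≤ n * k := Nat.le_mul_of_pos_left k hn
    have h4 : n * k ≤ r * (q.val + n * k) := by
      calc n * k ≤ q.val + n * k := Nat.le_add_left _ _
        _ ≤ r * (q.val + n * k) := Nat.le_mul_of_pos_left _ hr
    omega

lemma valid_of_tail_cyc (S : Schedule n r) (hn : 0 < n) (hr : 0 < r) (t0 : ℕ)
    (hS : ∀ u, t0 ≤ u → S u = cyc hn hr (u - t0)) : ValidSchedule S := by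
  intro q rm
  apply Set.infinite_of_forall_exists_gt
  intro N
  obtain ⟨hcyc, hk⟩ := cyc_calc hn hr q rm (N + 1)
  refine ⟨t0 + (r * (q.val + n * (N + 1)) + rm.val), ?_, by omega⟩
  show S _ = _
  rw [hS _ (Nat.le_add_right _ _), Nat.add_sub_cancel_left, hcyc]

end PrisonHelpers

/-- Lemma: in a winning protocol, no prisoner may become
finished before some moment at which he simultaneously provably owns all
configurations. -/
theorem finished_requires_provable_ownership (n r : ℕ) (C : Type)
    (σ : Strategy n C) (init : Fin r → C) (hwin : Winning σ init)
    (sch : Schedule n r) (t : ℕ) (p : Fin n)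
    (hfin : FinishedAt σ sch init t p) :
    ∃ u ≤ t, ∀ c : C, ProvablyOwns σ sch init u p c := by
  refine ⟨t, le_rfl, fun c sch' hobs rm hrm => ?_⟩
  by_contra hmiss
  have hr : 0 < r := rm.pos
  have hn : 0 < n := p.pos
  have hde := hist_decl_eq σ init sch' sch t hobs t le_rfl
  by_cases hdec : (prun σ sch init t).declared = true
  · -- a declaration already occurred before time t
    set S' : Schedule n r := fun u => if u < t then sch' u else cyc hn hr (u - t) with hS'def
    have hagree : ∀ u < t, S' u = sch' u := fun u hu => by simp only [hS'def]; rw [if_pos hu]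
    have hval : ValidSchedule S' :=
      valid_of_tail_cyc S' hn hr t (fun u hu => by simp only [hS'def]; rw [if_neg (by omega)])
    have hdecT : (prun σ S' init t).declared = true := by
      rw [prun_congr σ init S' sch' t hagree, hde.2]; exact hdec
    obtain ⟨u, hu, hq⟩ := (hwin S' hval).2 t hdecT p rm
    rw [hagree u hu] at hq
    exact hmiss ⟨u, hu, hq⟩
  · have hbelow : ∀ v, v ≤ t → ¬ (prun σ sch init v).declared = true :=
      fun v hv h => hdec (declared_mono σ init sch hv h)
    by_cases hq0 : ∃ q0 : Fin n, q0 ≠ p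
    · obtain ⟨q0, hq0p⟩ := hq0
      -- the round-robin over prisoners other than p
      set oq : ℕ → Fin n := fun m =>
        if hm : m % n = p.val then q0 else ⟨m % n, Nat.mod_lt _ hn⟩ with hoqdef
      have hoq_ne : ∀ m, oq m ≠ p := by
        intro m
        simp only [hoqdef]
        split
        · exact hq0p
        · exact fun h => (by rename_i hm; exact hm (congrArg Fin.val h))
      have hoq_eq : ∀ (q : Fin n), q ≠ p → ∀ k, oq (q.val + n * k) = q := by
        intro q hq k
        have hmod : (q.val + n * k) % n = q.val := by
          rw [Nat.add_mul_mod_self_left]; exact Nat.mod_eq_of_lt q.isLt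
        simp only [hoqdef]
        rw [dif_neg (by rw [hmod]; exact fun h => hq (Fin.ext h))]
        exact Fin.ext hmod
      set ocyc : ℕ → Fin n × Fin r := fun m =>
        (oq (m / r), ⟨m % r, Nat.mod_lt _ hr⟩) with hocycdef
      set Sω : Schedule n r := fun u => if u < t then sch u else ocyc (u - t) with hSωdef
      have hagrω : ∀ u < t, Sω u = sch u := fun u hu => by simp only [hSωdef]; rw [if_pos hu]
      have hωtail : ∀ m, Sω (t + m) = ocyc m := by
        intro m
        simp only [hSωdef]
        rw [if_neg (by omega), Nat.add_sub_cancel_left]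
      have key : ∃ (S : Schedule n r) (T : ℕ), (∀ u < t, S u = sch u) ∧ t ≤ T ∧
          (∀ u, t ≤ u → u < T → (S u).1 ≠ p) ∧ (prun σ S init T).declared = true := by
        by_contra hkey
        push_neg at hkey
        have hSω : ∀ v, (prun σ Sω init v).declared = false := by
          intro v
          rcases le_or_gt v t with hv | hv
          · rw [prun_congr σ init Sω sch v (fun u hu => hagrω u (by omega))]
            exact Bool.not_eq_true _ ▸ (hbelow v hv)
          · set Sk : Schedule n r := fun u => if u < v then Sω u else cyc hn hr (u - v) with hSkdef
            have hk1 : ∀ u < v, Sk u = Sω u := fun u hu => by simp only [hSkdef]; rw [if_pos hu]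
            have hk2 : ∀ u < t, Sk u = sch u := fun u hu =>
              (hk1 u (by omega)).trans (hagrω u hu)
            have hk3 : ∀ u, t ≤ u → u < v → (Sk u).1 ≠ p := by
              intro u hu huv
              rw [hk1 u huv, show Sω u = ocyc (u - t) from by
                simp only [hSωdef]; rw [if_neg (by omega)]]
              exact hoq_ne _
            have h4 := hkey Sk v hk2 (by omega) hk3
            rw [prun_congr σ init Sω Sk v (fun u hu => (hk1 u hu).symm)]
            exact Bool.not_eq_true _ ▸ h4
        -- the interleaved valid schedule where p's visits do nothing
        set Ss : Schedule n r := fun u => if u < t then sch u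
          else if (u - t) % 2 = 0 then (p, ⟨((u - t) / 2) % r, Nat.mod_lt _ hr⟩)
          else ocyc ((u - t) / 2) with hSsdef
        have hagrS : ∀ u < t, Ss u = sch u := fun u hu => by simp only [hSsdef]; rw [if_pos hu]
        have heven : ∀ m, Ss (t + 2 * m) = (p, ⟨m % r, Nat.mod_lt _ hr⟩) := by
          intro m
          simp only [hSsdef]
          rw [if_neg (by omega), Nat.add_sub_cancel_left, if_pos (Nat.mul_mod_right 2 m)]
          refine Prod.ext rfl (Fin.ext ?_)
          show 2 * m / 2 % r = m % r
          rw [Nat.mul_div_cancel_left m (by norm_num : 0 < 2)]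
        have hodd : ∀ m, Ss (t + (2 * m + 1)) = ocyc m := by
          intro m
          simp only [hSsdef]
          rw [if_neg (by omega), Nat.add_sub_cancel_left, if_neg (by omega),
            show (2 * m + 1) / 2 = m from by omega]
        have hvalSs : ValidSchedule Ss := by
          intro q rm'
          apply Set.infinite_of_forall_exists_gt
          intro N
          by_cases hqp : q = p
          · subst hqp
            refine ⟨t + 2 * (rm'.val + r * (N + 1)), ?_, ?_⟩
            · show Ss _ = _
              rw [heven]
              refine Prod.ext rfl (Fin.ext ?_)
              show (rm'.val + r * (N + 1)) % r = rm'.val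
              rw [Nat.add_mul_mod_self_left]; exact Nat.mod_eq_of_lt rm'.isLt
            · have := Nat.le_mul_of_pos_left (N + 1) hr
              omega
          · obtain ⟨hcalc, hge⟩ := cyc_calc hn hr q rm' (N + 1)
            set m := r * (q.val + n * (N + 1)) + rm'.val with hmdef
            have hdiv : m / r = q.val + n * (N + 1) := by
              rw [hmdef, Nat.mul_add_div hr, Nat.div_eq_of_lt rm'.isLt, Nat.add_zero]
            have hmod : m % r = rm'.val := by
              rw [hmdef, Nat.mul_add_mod]; exact Nat.mod_eq_of_lt rm'.isLt
            refine ⟨t + (2 * m + 1), ?_, by omega⟩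
            show Ss _ = _
            rw [hodd m]
            simp only [hocycdef]
            rw [hdiv]
            exact Prod.ext (hoq_eq q hqp (N + 1)) (Fin.ext hmod)
        have hsim : ∀ m, (prun σ Ss init (t + 2 * m)).rooms = (prun σ Sω init (t + m)).rooms ∧
            (∀ q : Fin n, q ≠ p →
              (prun σ Ss init (t + 2 * m)).hist q = (prun σ Sω init (t + m)).hist q) ∧
            (prun σ Ss init (t + 2 * m)).declared = (prun σ Sω init (t + m)).declared := by
          intro m
          induction m with
          | zero =>
            rw [Nat.mul_zero, Nat.add_zero, prun_congr σ init Ss sch t hagrS,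
              prun_congr σ init Sω sch t hagrω]
            exact ⟨rfl, fun _ _ => rfl, rfl⟩
          | succ m ih =>
            obtain ⟨ihr, ihh, ihd⟩ := ih
            have hpvis : (Ss (t + 2 * m)).1 = p := by rw [heven]
            obtain ⟨hrmeq, hflag⟩ := hfin Ss hagrS (t + 2 * m) (Nat.le_add_right _ _) hpvis
            have hr2 : (prun σ Ss init (t + 2 * m + 1)).rooms = (prun σ Sω init (t + m)).rooms := by
              rw [hrmeq, ihr]
            have hh2 : ∀ q : Fin n, q ≠ p → (prun σ Ss init (t + 2 * m + 1)).hist q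
                = (prun σ Sω init (t + m)).hist q := by
              intro q hq
              rw [prun_succ σ init Ss (t + 2 * m)]
              simp only [pstep]
              rw [Function.update_of_ne (by rw [hpvis]; exact hq)]
              exact ihh q hq
            have hd2 : (prun σ Ss init (t + 2 * m + 1)).declared
                = (prun σ Sω init (t + m)).declared := by
              rw [prun_succ σ init Ss (t + 2 * m)]
              simp only [pstep]
              rw [hpvis, hflag, Bool.or_false]
              exact ihd
            have hov : Ss (t + 2 * m + 1) = Sω (t + m) := by
              rw [show t + 2 * m + 1 = t + (2 * m + 1) from by omega, hodd m, hωtail m]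
            have hvne : (Sω (t + m)).1 ≠ p := by rw [hωtail m]; exact hoq_ne _
            have e1 : t + 2 * (m + 1) = (t + 2 * m + 1) + 1 := by ring
            have e2 : t + (m + 1) = (t + m) + 1 := by ring
            rw [e1, e2, prun_succ σ init Ss (t + 2 * m + 1), prun_succ σ init Sω (t + m), hov]
            have hcur : (prun σ Ss init (t + 2 * m + 1)).rooms (Sω (t + m)).2
                = (prun σ Sω init (t + m)).rooms (Sω (t + m)).2 := by rw [hr2]
            have hhv : (prun σ Ss init (t + 2 * m + 1)).hist (Sω (t + m)).1
                = (prun σ Sω init (t + m)).hist (Sω (t + m)).1 := hh2 _ hvne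
            refine ⟨?_, ?_, ?_⟩
            · simp only [pstep]
              rw [hcur, hhv, hr2]
            · intro q hq
              simp only [pstep]
              by_cases hqv : q = (Sω (t + m)).1
              · subst hqv
                rw [Function.update_self, Function.update_self, hcur, hhv]
              · rw [Function.update_of_ne hqv, Function.update_of_ne hqv]
                exact hh2 q hq
            · simp only [pstep]
              rw [hcur, hhv, hd2]
        have hSsF : ∀ v, ¬ (prun σ Ss init v).declared = true := by
          intro v hv
          have h1 := declared_mono σ init Ss (show v ≤ t + 2 * v by omega) hv
          rw [(hsim v).2.2, hSω (t + v)] at h1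
          exact Bool.false_ne_true h1
        obtain ⟨T, hT⟩ := (hwin Ss hvalSs).1
        exact hSsF T hT
      obtain ⟨S, T, hagrS', htT, hnop, hdecT⟩ := key
      obtain ⟨π, hπ⟩ := exists_perm σ init sch' sch t hobs t le_rfl
      set S' : Schedule n r := fun u => if u < t then sch' u
        else if u < T then ((S u).1, π (S u).2) else cyc hn hr (u - T) with hS'def
      have hpre' : ∀ u < t, S' u = sch' u := fun u hu => by simp only [hS'def]; rw [if_pos hu]
      have hval' : ValidSchedule S' := by
        refine valid_of_tail_cyc S' hn hr T (fun u hu => ?_)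
        simp only [hS'def]
        rw [if_neg (by omega), if_neg (by omega)]
      have hinv : ∀ u, t ≤ u → u ≤ T →
          (∀ j, (prun σ S' init u).rooms (π j) = (prun σ S init u).rooms j) ∧
          (prun σ S' init u).hist = (prun σ S init u).hist ∧
          (prun σ S' init u).declared = (prun σ S init u).declared := by
        intro u hu
        induction u, hu using Nat.le_induction with
        | base =>
          intro _
          rw [prun_congr σ init S' sch' t hpre', prun_congr σ init S sch t hagrS']
          exact ⟨hπ, hde.1, hde.2⟩
        | succ u hu ih =>
          intro huT
          obtain ⟨h1, h2, h3⟩ := ih (by omega)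
          have hS'u : S' u = ((S u).1, π (S u).2) := by
            simp only [hS'def]; rw [if_neg (by omega), if_pos (by omega)]
          rw [prun_succ σ init S' u, prun_succ σ init S u, hS'u]
          refine ⟨?_, ?_, ?_⟩
          · intro j
            simp only [pstep]
            by_cases hj : j = (S u).2
            · subst hj
              rw [Function.update_self, Function.update_self, h1, h2]
            · rw [Function.update_of_ne (fun h => hj (π.injective h)),
                Function.update_of_ne hj]
              exact h1 j
          · simp only [pstep]
            rw [h1, h2]
          · simp only [pstep]
            rw [h1, h2, h3]
      have hd' : (prun σ S' init T).declared = true := by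
        rw [(hinv T htT le_rfl).2.2]; exact hdecT
      obtain ⟨u, huT, hu_eq⟩ := (hwin S' hval').2 T hd' p rm
      by_cases hut : u < t
      · refine hmiss ⟨u, hut, ?_⟩
        rw [← hpre' u hut]; exact hu_eq
      · have hne : (S' u).1 ≠ p := by
          simp only [hS'def]
          rw [if_neg hut, if_pos huT]
          exact hnop u (by omega) huT
        rw [hu_eq] at hne
        exact hne rfl
    · push_neg at hq0
      set S1 : Schedule n r := fun u => if u < t then sch u
        else (p, ⟨u % r, Nat.mod_lt _ hr⟩) with hS1def
      have hagr : ∀ u < t, S1 u = sch u := fun u hu => by simp only [hS1def]; rw [if_pos hu]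
      have htail : ∀ u, t ≤ u → S1 u = (p, ⟨u % r, Nat.mod_lt _ hr⟩) := fun u hu => by
        simp only [hS1def]; rw [if_neg (by omega)]
      have hval : ValidSchedule S1 := by
        intro q rm'
        apply Set.infinite_of_forall_exists_gt
        intro N
        have hgrow : t + N + 1 ≤ r * (t + N + 1) := Nat.le_mul_of_pos_left _ hr
        refine ⟨r * (t + N + 1) + rm'.val, ?_, by omega⟩
        show S1 _ = _
        rw [htail _ (by omega), hq0 q]
        refine Prod.ext rfl (Fin.ext ?_)
        show (r * (t + N + 1) + rm'.val) % r = rm'.val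
        rw [Nat.mul_add_mod]; exact Nat.mod_eq_of_lt rm'.isLt
      have hfalse : ∀ v, (prun σ S1 init v).declared = false := by
        intro v
        induction v with
        | zero => rfl
        | succ v ih =>
          by_cases hv : v + 1 ≤ t
          · rw [prun_congr σ init S1 sch (v + 1) (fun u hu => hagr u (by omega))]
            exact Bool.not_eq_true _ ▸ hbelow (v + 1) hv
          · have hvt : t ≤ v := by omega
            have hp1 : (S1 v).1 = p := by rw [htail v hvt]
            have hfl := (hfin S1 hagr v hvt hp1).2
            rw [prun_succ σ init S1 v]
            simp only [pstep]
            rw [hp1, hfl, Bool.or_false]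
            exact ih
      obtain ⟨T, hT⟩ := (hwin S1 hval).1
      rw [hfalse T] at hT
      exact Bool.false_ne_true hT
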